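/- arXiv:2211.03685 — 2 statements merged into one kernel-verified Lean document; each statement's English description precedes it below -/
import Mathlib

section
/- In a finite ordinal potential game, from every configuration there exists a best response path leading to a recursive Nash equilibrium. -/
/-! A best response step never lowers the potential, so along a best response path `Ψ` is
monotone. In a finite game some reachable configuration `y` can reach back every configuration
reachable from it (take one whose reachable set has least cardinality). If a player could improve
at such a `y`, switching to a best response would strictly raise `Ψ`, and no path could lead back
to `y`. -/

open Function

variable {ι : Type*} [Fintype ι] [DecidableEq ι] {A : ι → Type*} [∀ i, Fintype (A i)]

/-- `a` is a best response action of player `i` to the profile `x₋ᵢ`. -/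
def IsBR (u : ι → (∀ i, A i) → ℝ) (i : ι) (x : ∀ i, A i) (a : A i) : Prop :=
  ∀ b : A i, u i (update x i b) ≤ u i (update x i a)

/-- One step of the best response dynamics: a single player switches to a best response. -/
def BRStep (u : ι → (∀ i, A i) → ℝ) (x y : ∀ i, A i) : Prop :=
  x ≠ y ∧ ∃ i, IsBR u i x (y i) ∧ ∀ j, j ≠ i → y j = x j

/-- A best response path from `x` to `y`. -/
def BRPath (u : ι → (∀ i, A i) → ℝ) : (∀ i, A i) → (∀ i, A i) → Prop :=
  Relation.ReflTransGen (BRStep u)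

/-- A configuration is recursive if every configuration reachable from it by a
best response path can reach it back by a best response path. -/
def Recursive (u : ι → (∀ i, A i) → ℝ) (x : ∀ i, A i) : Prop :=
  ∀ y, BRPath u x y → BRPath u y x

/-- `Ψ` is an ordinal potential for the game with utilities `u`. -/
def OrdinalPotential (u : ι → (∀ i, A i) → ℝ) (Ψ : (∀ i, A i) → ℝ) : Prop :=
  ∀ i (x y : ∀ i, A i), (∀ j, j ≠ i → x j = y j) → (u i x < u i y ↔ Ψ x < Ψ y)

open Relation

theorem Relation.exists_reflTransGen_and_recurrent {α : Type*} [Finite α] (r : α → α → Prop)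
    (x : α) : ∃ y, ReflTransGen r x y ∧ ∀ z, ReflTransGen r y z → ReflTransGen r z y := by
  obtain ⟨y, hxy, hmin⟩ := Set.exists_min_image {y | ReflTransGen r x y}
    (fun y => {w | ReflTransGen r y w}.ncard) (Set.toFinite _) ⟨x, ReflTransGen.refl⟩
  refine ⟨y, hxy, fun z hyz => ?_⟩
  have hsub : {w | ReflTransGen r z w} ⊆ {w | ReflTransGen r y w} := fun w hzw => hyz.trans hzw
  have heq := Set.eq_of_subset_of_ncard_le hsub (hmin z (hxy.trans hyz)) (Set.toFinite _)
  have hzy : y ∈ {w | ReflTransGen r z w} := heq ▸ ReflTransGen.refl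
  exact hzy

section Game

variable {ι : Type*} [DecidableEq ι] {A : ι → Type*} {u : ι → (∀ i, A i) → ℝ}
  {Ψ : (∀ i, A i) → ℝ}

theorem exists_isBR [∀ i, Finite (A i)] (u : ι → (∀ i, A i) → ℝ) (i : ι) (x : ∀ i, A i) :
    ∃ a, IsBR u i x a :=
  have : Nonempty (A i) := ⟨x i⟩
  Finite.exists_max fun a => u i (update x i a)

theorem brStep_update {i : ι} {x : ∀ i, A i} {a : A i} (ha : IsBR u i x a)
    (hlt : u i x < u i (update x i a)) : BRStep u x (update x i a) := by
  refine ⟨fun h => hlt.ne (congrArg (u i) h), i, ?_, fun j hj => update_of_ne hj _ _⟩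
  rwa [update_self]

theorem OrdinalPotential.le_of_brStep (hΨ : OrdinalPotential u Ψ) {x y : ∀ i, A i}
    (h : BRStep u x y) : Ψ x ≤ Ψ y := by
  obtain ⟨-, i, hbr, hoff⟩ := h
  have hy : y = update x i (y i) := eq_update_iff.mpr ⟨rfl, hoff⟩
  have hu : u i x ≤ u i y := by simpa only [update_eq_self, ← hy] using hbr (x i)
  exact not_lt.mp fun hlt => hu.not_gt ((hΨ i y x hoff).mpr hlt)

theorem OrdinalPotential.le_of_brPath (hΨ : OrdinalPotential u Ψ) {x y : ∀ i, A i}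
    (h : BRPath u x y) : Ψ x ≤ Ψ y := by
  induction h with
  | refl => exact le_rfl
  | tail _ hstep ih => exact ih.trans (hΨ.le_of_brStep hstep)

theorem OrdinalPotential.isBR_self_of_recursive [∀ i, Finite (A i)]
    (hΨ : OrdinalPotential u Ψ) {x : ∀ i, A i} (hx : Recursive u x) (i : ι) :
    IsBR u i x (x i) := by
  by_contra hnot
  obtain ⟨b, hb⟩ : ∃ b, u i x < u i (update x i b) := by
    simpa only [IsBR, update_eq_self, not_forall, not_le] using hnot
  obtain ⟨a, ha⟩ := exists_isBR u i x
  have hlt : u i x < u i (update x i a) := hb.trans_le (ha b)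
  have hΨlt : Ψ x < Ψ (update x i a) :=
    (hΨ i x _ fun j hj => (update_of_ne hj _ _).symm).mp hlt
  have hback := hx _ (ReflTransGen.single (brStep_update ha hlt))
  exact (hΨ.le_of_brPath hback).not_gt hΨlt

end Game

/-- In a finite ordinal potential game, from every configuration there is a best
response path to a recursive Nash equilibrium. -/
theorem brpath_to_recursive_nash (u : ι → (∀ i, A i) → ℝ) (Ψ : (∀ i, A i) → ℝ)
    (hΨ : OrdinalPotential u Ψ) (x : ∀ i, A i) :
    ∃ y : ∀ i, A i, BRPath u x y ∧ Recursive u y ∧ ∀ i, IsBR u i y (y i) := by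
  obtain ⟨y, hxy, hy⟩ := exists_reflTransGen_and_recurrent (BRStep u) x
  exact ⟨y, hxy, hy, hΨ.isBR_self_of_recursive hy⟩
end

section
/- In a centrality game, an action x_i is a best response for player i to x_{-i} if and only if every node k not in x_i has expected hitting time τ_k^i(x_{-i}) at least as large as the maximum expected hitting time τ_j^i(x_{-i}) over j ∈ x_i. Equivalently, the best response set consists exactly of the deg_i-subsets of V∖{i} minimizing Σ_{j ∈ x_i} τ_j^i(x_{-i}). -/
/-!
The hitting times `τ` of node `i` do not involve `i`'s own links. Kac's formula says that the
PageRank of `i` is the reciprocal of the expected return time to `i`, and after `i` wires the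
links `b` this return time is `1 + (1 - β) ⟨η, τ⟩ + (β / d i) ∑_{j ∈ b} τ j`, which is positive
because `τ ≥ 0` by a minimum principle. So `i` maximizes her PageRank exactly by minimizing
`∑_{j ∈ b} τ j` over `d i`-subsets, and an exchange argument identifies these minimizers as the
sets whose values lie below all values outside.
-/

open Function Finset Matrix

variable {V : Type*} [Fintype V] [DecidableEq V]

/-- The PageRank centrality vector `π = (1-β)(I - βRᵀ)⁻¹ η` of the directed graph
with out-neighborhoods `E`, discount factor `β` and intrinsic centrality `η`. -/
noncomputable def pagerank (β : ℝ) (η : V → ℝ) (E : V → Finset V) : V → ℝ :=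
  (1 - β) • (((1 : Matrix V V ℝ) -
      β • (Matrix.of fun j k : V => if k ∈ E j then ((E j).card : ℝ)⁻¹ else 0)ᵀ)⁻¹).mulVec η

/-- A configuration of the centrality game with out-degree profile `d`:
each node `i` wires `d i` out-links, none of them a self-loop. -/
def ValidConf (d : V → ℕ) (x : V → Finset V) : Prop :=
  ∀ i, i ∉ x i ∧ (x i).card = d i

/-- Nash equilibrium of the centrality game `Γ(V,β,η,d)`: a valid configuration in
which no player can strictly increase her own PageRank centrality by rewiring her
out-links. -/
def NashEq (β : ℝ) (η : V → ℝ) (d : V → ℕ) (x : V → Finset V) : Prop :=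
  ValidConf d x ∧ ∀ i (b : Finset V), i ∉ b → b.card = d i →
    pagerank β η (update x i b) i ≤ pagerank β η x i

namespace Finset

variable {α M : Type*} [AddCommMonoid M] [LinearOrder M] [IsOrderedCancelAddMonoid M]

theorem sum_le_sum_of_card_eq_of_forall_le {s t : Finset α} {f : α → M} (hst : #s = #t)
    (h : ∀ j ∈ s, ∀ k ∈ t, f j ≤ f k) : ∑ j ∈ s, f j ≤ ∑ k ∈ t, f k := by
  obtain rfl | ht := t.eq_empty_or_nonempty
  · simp [card_eq_zero.mp hst]
  obtain ⟨k₀, hk₀, hmin⟩ := t.exists_min_image f ht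
  calc ∑ j ∈ s, f j ≤ #s • f k₀ := sum_le_card_nsmul s f _ fun j hj => h j hj k₀ hk₀
    _ = #t • f k₀ := by rw [hst]
    _ ≤ ∑ k ∈ t, f k := card_nsmul_le_sum t f _ hmin

theorem forall_sum_le_sum_iff_forall_le {S : Set α} {a : Finset α} (haS : ↑a ⊆ S) (f : α → M) :
    (∀ b : Finset α, ↑b ⊆ S → #b = #a → ∑ j ∈ a, f j ≤ ∑ j ∈ b, f j) ↔
      ∀ k ∉ a, k ∈ S → ∀ j ∈ a, f j ≤ f k := by
  classical
  constructor
  · intro hmin k hka hkS j hja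
    have hk : k ∉ a.erase j := fun hk => hka (mem_of_mem_erase hk)
    have hswap := hmin (insert k (a.erase j))
      (by simpa [Set.insert_subset_iff, hkS] using
        (coe_subset.mpr (a.erase_subset j)).trans haS)
      (by rw [card_insert_of_notMem hk, card_erase_add_one hja])
    rwa [sum_insert hk, ← add_sum_erase a f hja, add_le_add_iff_right] at hswap
  · intro hle b hbS hba
    rw [← sum_inter_add_sum_sdiff a b, ← sum_inter_add_sum_sdiff b a, inter_comm]
    refine add_le_add le_rfl (sum_le_sum_of_card_eq_of_forall_le ?_ ?_)
    · exact card_sdiff_comm hba.symm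
    · intro j hj k hk
      rw [mem_sdiff] at hj hk
      exact hle k hk.2 (hbS hk.1) j hj.1

end Finset

namespace Matrix

variable {n : Type*} [Fintype n]

theorem le_dotProduct_of_forall_le {K : Type*} [CommRing K] [PartialOrder K] [IsOrderedRing K]
    {w v : n → K} {c : K} (hw₀ : 0 ≤ w) (hw₁ : w ⬝ᵥ 1 = 1) (hv : ∀ j, c ≤ v j) :
    c ≤ w ⬝ᵥ v := by
  calc c = w ⬝ᵥ (c • 1) := by rw [dotProduct_smul, hw₁, smul_eq_mul, mul_one]
    _ ≤ w ⬝ᵥ v := dotProduct_le_dotProduct_of_nonneg_left (fun j => by simpa using hv j) hw₀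

theorem det_one_sub_smul_transpose_ne_zero [DecidableEq n] {R : Matrix n n ℝ}
    (hR : R ∈ rowStochastic ℝ n) {β : ℝ} (hβ₀ : 0 ≤ β) (hβ₁ : β < 1) :
    (1 - β • Rᵀ).det ≠ 0 := by
  rw [← transpose_one, ← transpose_smul, ← transpose_sub, det_transpose]
  refine det_ne_zero_of_sum_row_lt_diag fun k => ?_
  have hoff : ∑ j ∈ Finset.univ.erase k, ‖(1 - β • R) k j‖ = β * (1 - R k k) := by
    rw [← sum_row_of_mem_rowStochastic hR k, ← Finset.add_sum_erase _ _ (Finset.mem_univ k),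
      add_sub_cancel_left, Finset.mul_sum]
    refine Finset.sum_congr rfl fun j hj => ?_
    rw [sub_apply, one_apply_ne (Finset.ne_of_mem_erase hj).symm, zero_sub, norm_neg, smul_apply,
      smul_eq_mul, Real.norm_of_nonneg (mul_nonneg hβ₀ (nonneg_of_mem_rowStochastic hR))]
  have hkk : R k k ≤ 1 := le_one_of_mem_rowStochastic hR
  rw [hoff, sub_apply, one_apply_eq, smul_apply, smul_eq_mul,
    Real.norm_of_nonneg (by nlinarith)]
  linarith

end Matrix

section HittingTime

variable {n K : Type*} [Fintype n]

/-- First-step equations for the expected times `τ j` to reach `i` by the walk that follows `R`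
with probability `β` and otherwise restarts from the distribution `η`. -/
def IsHittingTime [CommRing K] (β : K) (η : n → K) (R : Matrix n n K) (i : n) (τ : n → K) :
    Prop :=
  τ i = 0 ∧ ∀ j, j ≠ i → τ j = 1 + (1 - β) * (η ⬝ᵥ τ) + β * (R *ᵥ τ) j

theorem dotProduct_one_eq_one_of_eq_add_smul_vecMul [Field K] {β : K} {η π : n → K}
    {R : Matrix n n K} (hR : R *ᵥ 1 = 1) (hβ : β ≠ 1) (hη : η ⬝ᵥ 1 = 1)
    (hπ : π = (1 - β) • η + β • (π ᵥ* R)) : π ⬝ᵥ 1 = 1 := by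
  have h : π ⬝ᵥ 1 = (1 - β) + β * (π ⬝ᵥ 1) := by
    conv_lhs => rw [hπ]
    rw [add_dotProduct, smul_dotProduct, smul_dotProduct, ← dotProduct_mulVec, hR, hη,
      smul_eq_mul, smul_eq_mul, mul_one]
  have h' : (1 - β) * (π ⬝ᵥ 1) = (1 - β) * 1 := by linear_combination h
  exact mul_left_cancel₀ (sub_ne_zero.2 hβ.symm) h'

/-- Kac's formula: the stationary mass of `i` times its expected return time is `1`. -/
theorem IsHittingTime.mul_returnTime_eq_one [CommRing K] [DecidableEq n] {β : K}
    {η π τ : n → K} {R : Matrix n n K} {i : n} (hτ : IsHittingTime β η R i τ)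
    (hπ : π = (1 - β) • η + β • (π ᵥ* R)) (hπ₁ : π ⬝ᵥ 1 = 1) :
    π i * (1 + (1 - β) * (η ⬝ᵥ τ) + β * (R *ᵥ τ) i) = 1 := by
  set c := 1 + (1 - β) * (η ⬝ᵥ τ)
  set m : n → K := c • 1 + β • (R *ᵥ τ)
  have hmi : m i = c + β * (R *ᵥ τ) i := by simp [m]
  have hm : m = τ + Pi.single i (m i) := by
    ext j
    rcases eq_or_ne j i with rfl | hj
    · simp [hτ.1]
    · simp [m, c, hj, hτ.2 j hj]
  have hβπ : β • (π ᵥ* R) = π - (1 - β) • η := eq_sub_of_add_eq' hπ.symm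
  have key : π ⬝ᵥ m = 1 + π ⬝ᵥ τ :=
    calc π ⬝ᵥ m = c * (π ⬝ᵥ 1) + (β • (π ᵥ* R)) ⬝ᵥ τ := by
          simp only [m, dotProduct_add, dotProduct_smul, dotProduct_mulVec, smul_dotProduct,
            smul_eq_mul]
      _ = 1 + π ⬝ᵥ τ := by
          rw [hπ₁, hβπ, sub_dotProduct, smul_dotProduct, smul_eq_mul]
          ring
  rw [hm, dotProduct_add, dotProduct_single, hmi] at key
  linear_combination key

theorem IsHittingTime.nonneg [DecidableEq n] {β : ℝ} {η τ : n → ℝ} {R : Matrix n n ℝ}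
    {i : n} (hτ : IsHittingTime β η R i τ) (hR : R ∈ rowStochastic ℝ n) (hη₀ : 0 ≤ η)
    (hη₁ : η ⬝ᵥ 1 = 1) (hβ₀ : 0 ≤ β) (hβ₁ : β ≤ 1) : 0 ≤ τ := by
  obtain ⟨j, -, hj⟩ := Finset.univ.exists_min_image τ ⟨i, Finset.mem_univ i⟩
  have hmin : ∀ k, τ j ≤ τ k := fun k => hj k (Finset.mem_univ k)
  intro k
  refine le_trans ?_ (hmin k)
  rcases eq_or_ne j i with rfl | hji
  · exact hτ.1.ge
  exfalso
  -- at a minimum `j ≠ i` the first-step equation would give `τ j ≥ 1 + τ j`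
  have hητ : τ j ≤ η ⬝ᵥ τ := le_dotProduct_of_forall_le hη₀ hη₁ hmin
  have hRτ : τ j ≤ (R *ᵥ τ) j :=
    le_dotProduct_of_forall_le (fun k => nonneg_of_mem_rowStochastic hR)
      (congrFun (one_vecMul_of_mem_rowStochastic hR) j) hmin
  have := hτ.2 j hji
  nlinarith [mul_le_mul_of_nonneg_left hητ (sub_nonneg.2 hβ₁),
    mul_le_mul_of_nonneg_left hRτ hβ₀]

end HittingTime

noncomputable def linkMatrix (E : V → Finset V) : Matrix V V ℝ :=
  Matrix.of fun j k : V => if k ∈ E j then ((E j).card : ℝ)⁻¹ else 0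

theorem linkMatrix_mulVec (E : V → Finset V) (f : V → ℝ) (j : V) :
    (linkMatrix E *ᵥ f) j = (#(E j) : ℝ)⁻¹ * ∑ k ∈ E j, f k := by
  simp [linkMatrix, mulVec, dotProduct, ite_mul, Finset.sum_ite_mem, Finset.mul_sum]

theorem linkMatrix_mem_rowStochastic {E : V → Finset V} (hE : ∀ j, (E j).Nonempty) :
    linkMatrix E ∈ rowStochastic ℝ V := by
  refine mem_rowStochastic.2 ⟨fun j k => ?_, funext fun j => ?_⟩
  · simp only [linkMatrix, of_apply]
    split_ifs <;> positivity
  · rw [linkMatrix_mulVec]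
    simp [(hE j).card_pos.ne']

theorem pagerank_eq_add_smul_vecMul {β : ℝ} (η : V → ℝ) (E : V → Finset V)
    (hdet : (1 - β • (linkMatrix E)ᵀ).det ≠ 0) :
    pagerank β η E = (1 - β) • η + β • (pagerank β η E ᵥ* linkMatrix E) := by
  have h : (1 - β • (linkMatrix E)ᵀ) *ᵥ pagerank β η E = (1 - β) • η := by
    rw [show pagerank β η E = (1 - β) • ((1 - β • (linkMatrix E)ᵀ)⁻¹ *ᵥ η) from rfl,
      mulVec_smul, mulVec_mulVec, mul_nonsing_inv _ (isUnit_iff_ne_zero.2 hdet), one_mulVec]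
  rw [sub_mulVec, one_mulVec, smul_mulVec, mulVec_transpose] at h
  exact eq_add_of_sub_eq h

theorem pagerank_mul_returnTime {β : ℝ} {η τ : V → ℝ} {E : V → Finset V} {i : V}
    (hβ₀ : 0 ≤ β) (hβ₁ : β < 1) (hη : η ⬝ᵥ 1 = 1) (hE : ∀ j, (E j).Nonempty)
    (hτ : IsHittingTime β η (linkMatrix E) i τ) :
    pagerank β η E i * (1 + (1 - β) * (η ⬝ᵥ τ) + β * (linkMatrix E *ᵥ τ) i) = 1 :=
  have hR := linkMatrix_mem_rowStochastic hE
  have hπ := pagerank_eq_add_smul_vecMul η E (det_one_sub_smul_transpose_ne_zero hR hβ₀ hβ₁)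
  hτ.mul_returnTime_eq_one hπ (dotProduct_one_eq_one_of_eq_add_smul_vecMul hR.2 hβ₁.ne hη hπ)

theorem isHittingTime_linkMatrix_update {β : ℝ} {η τ : V → ℝ} {d : V → ℕ}
    {x : V → Finset V} {i : V} (hx : ∀ j, #(x j) = d j) (hτ₀ : τ i = 0)
    (hτ : ∀ j, j ≠ i → τ j = 1 + (1 - β) * (∑ k, η k * τ k)
        + (β / (d j : ℝ)) * ∑ k ∈ x j, τ k) (b : Finset V) :
    IsHittingTime β η (linkMatrix (update x i b)) i τ :=
  ⟨hτ₀, fun j hj => by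
    rw [hτ j hj, linkMatrix_mulVec, update_of_ne hj, hx j, div_eq_mul_inv, mul_assoc]
    rfl⟩

theorem pagerank_update_mul_returnTime {β : ℝ} {η τ : V → ℝ} {d : V → ℕ}
    {x : V → Finset V} {i : V} {b : Finset V} (hβ₀ : 0 ≤ β) (hβ₁ : β < 1) (hη : η ⬝ᵥ 1 = 1)
    (hd : ∀ j, 1 ≤ d j) (hx : ∀ j, #(x j) = d j) (hb : #b = d i)
    (hτ : IsHittingTime β η (linkMatrix (update x i b)) i τ) :
    pagerank β η (update x i b) i * (1 + (1 - β) * (η ⬝ᵥ τ) + β / d i * ∑ j ∈ b, τ j) = 1 := by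
  have hE : ∀ j, (update x i b j).Nonempty := fun j => by
    rw [← card_pos]
    rcases eq_or_ne j i with rfl | hj
    · rw [update_self, hb]
      exact hd j
    · rw [update_of_ne hj, hx j]
      exact hd j
  have h := pagerank_mul_returnTime hβ₀ hβ₁ hη hE hτ
  rwa [linkMatrix_mulVec, update_self, hb, ← mul_assoc, ← div_eq_mul_inv] at h

/-- Best response characterization in the centrality game: given the hitting times
`τ` of node `i` determined by the other players' wiring, an admissible action `a`
is a best response for `i` iff every node outside `a` (other than `i`) has hitting
time at least `max_{j∈a} τ j`; equivalently, iff `a` minimizes `∑_{j∈a} τ j` over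
admissible actions. -/
theorem best_response_iff_hitting_times
    (β : ℝ) (hβ : β ∈ Set.Ioo (0 : ℝ) 1)
    (η : V → ℝ) (hη0 : ∀ v, 0 ≤ η v) (hη1 : ∑ v, η v = 1)
    (d : V → ℕ) (hd : ∀ i, 1 ≤ d i ∧ d i ≤ Fintype.card V - 1)
    (x : V → Finset V) (hx : ValidConf d x) (i : V)
    (τ : V → ℝ)
    (hτ0 : τ i = 0)
    (hτ : ∀ j, j ≠ i → τ j = 1 + (1 - β) * (∑ k, η k * τ k)
        + (β / (d j : ℝ)) * ∑ k ∈ x j, τ k) :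
    ∀ a : Finset V, i ∉ a → a.card = d i →
      ((∀ b : Finset V, i ∉ b → b.card = d i →
          pagerank β η (update x i b) i ≤ pagerank β η (update x i a) i) ↔
        (∀ k, k ∉ a → k ≠ i → ∀ j ∈ a, τ j ≤ τ k)) ∧
      ((∀ b : Finset V, i ∉ b → b.card = d i →
          pagerank β η (update x i b) i ≤ pagerank β η (update x i a) i) ↔
        (∀ b : Finset V, i ∉ b → b.card = d i → ∑ j ∈ a, τ j ≤ ∑ j ∈ b, τ j)) := by
  intro a hia hac
  have hη : η ⬝ᵥ 1 = 1 := by rwa [dotProduct_one]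
  have hcard : ∀ j, #(x j) = d j := fun j => (hx j).2
  have hτb := isHittingTime_linkMatrix_update hcard hτ0 hτ
  have hτ_nonneg : 0 ≤ τ := by
    refine (update_eq_self i x ▸ hτb (x i)).nonneg (linkMatrix_mem_rowStochastic fun j => ?_)
      hη0 hη hβ.1.le hβ.2.le
    rw [← card_pos, hcard]
    exact (hd j).1
  have hβd : 0 < β / d i := div_pos hβ.1 (by exact_mod_cast (hd i).1)
  set M : Finset V → ℝ := fun b => 1 + (1 - β) * (η ⬝ᵥ τ) + β / d i * ∑ j ∈ b, τ j with hM
  have hM_pos : ∀ b, 0 < M b := fun b =>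
    add_pos_of_pos_of_nonneg
      (add_pos_of_pos_of_nonneg one_pos
        (mul_nonneg (sub_nonneg.2 hβ.2.le) (dotProduct_nonneg_of_nonneg hη0 hτ_nonneg)))
      (mul_nonneg hβd.le (sum_nonneg fun j _ => hτ_nonneg j))
  have hπ : ∀ b : Finset V, #b = d i → pagerank β η (update x i b) i = (M b)⁻¹ := fun b hb =>
    eq_inv_of_mul_eq_one_left <|
      pagerank_update_mul_returnTime hβ.1.le hβ.2 hη (fun j => (hd j).1) hcard hb (hτb b)
  have hbest : (∀ b : Finset V, i ∉ b → #b = d i →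
      pagerank β η (update x i b) i ≤ pagerank β η (update x i a) i) ↔
      ∀ b : Finset V, i ∉ b → #b = d i → ∑ j ∈ a, τ j ≤ ∑ j ∈ b, τ j := by
    refine forall_congr' fun b => forall_congr' fun _ => forall_congr' fun hb => ?_
    rw [hπ b hb, hπ a hac, inv_le_inv₀ (hM_pos b) (hM_pos a), hM, add_le_add_iff_left,
      mul_le_mul_iff_right₀ hβd]
  refine ⟨hbest.trans ?_, hbest⟩
  simpa [Set.subset_compl_singleton_iff, hac] using
    forall_sum_le_sum_iff_forall_le (S := {i}ᶜ) (a := a) (by simpa using hia) τ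
end
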